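/- Let Q be a Jordan loop and x ∈ Q. If x³ · x⁸ = x^{11}, then x⁸ · x⁻¹ = x⁷. -/
import Mathlib


/-- A Jordan loop: a set with multiplication and identity element such that
the equations `a * x = b` and `y * a = b` have unique solutions, the
multiplication is commutative, and the Jordan identity
`(x² * y) * x = x² * (y * x)` holds. -/
class JordanLoop (Q : Type*) extends Mul Q, One Q where
  one_mul : ∀ x : Q, 1 * x = x
  mul_one : ∀ x : Q, x * 1 = x
  exists_unique_left_div : ∀ a b : Q, ∃! x : Q, a * x = b
  exists_unique_right_div : ∀ a b : Q, ∃! y : Q, y * a = b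
  mul_comm : ∀ x y : Q, x * y = y * x
  jordan : ∀ x y : Q, ((x * x) * y) * x = (x * x) * (y * x)

/-- Right-associated power: `jpow x 0 = 1`, `jpow x (k+1) = x * jpow x k`. -/
def jpow {Q : Type*} [Mul Q] [One Q] (x : Q) : ℕ → Q
  | 0 => 1
  | k + 1 => x * jpow x k

namespace JordanLoopAux

variable {Q : Type*} [JordanLoop Q]

lemma jl_mul_left_cancel (a : Q) {b c : Q} (h : a * b = a * c) : b = c := by
  obtain ⟨z, hz, hu⟩ := JordanLoop.exists_unique_left_div a (a * c)
  exact (hu b h).trans (hu c rfl).symm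

/-- `L_x` commutes with `L_{x²}`. -/
lemma jstar (x y : Q) : x * ((x * x) * y) = (x * x) * (x * y) := by
  rw [JordanLoop.mul_comm x ((x * x) * y), JordanLoop.jordan,
    JordanLoop.mul_comm y x]

lemma pow2 (x : Q) : jpow x 2 = x * x := by
  simp [jpow, JordanLoop.mul_one]

lemma pow_succ (x : Q) (n : ℕ) : jpow x (n + 1) = x * jpow x n := rfl

lemma pow2_mul (x : Q) (n : ℕ) : jpow x 2 * jpow x n = jpow x (n + 2) := by
  induction n with
  | zero => simp [jpow, JordanLoop.mul_one]
  | succ k ih =>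
      rw [pow2] at ih ⊢
      rw [pow_succ, ← jstar, ih]
      rfl

lemma pow4 (x : Q) : jpow x 2 * jpow x 2 = jpow x 4 := pow2_mul x 2

/-- `L_{x²}` commutes with `L_{x⁴}`. -/
lemma comm24 (x : Q) (y : Q) :
    jpow x 2 * (jpow x 4 * y) = jpow x 4 * (jpow x 2 * y) := by
  have j := JordanLoop.jordan (jpow x 2) y
  rw [pow4] at j
  rw [JordanLoop.mul_comm (jpow x 2) (jpow x 4 * y), j,
    JordanLoop.mul_comm y (jpow x 2)]

lemma pow4_mul_aux (x : Q) (n : ℕ) :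
    jpow x 4 * jpow x n = jpow x (n + 4) ∧
      jpow x 4 * jpow x (n + 1) = jpow x (n + 5) := by
  induction n with
  | zero =>
      constructor
      · simp [jpow, JordanLoop.mul_one]
      · rw [show (jpow x 1 : Q) = x by simp [jpow, JordanLoop.mul_one],
          JordanLoop.mul_comm]
        rfl
  | succ k ih =>
      refine ⟨ih.2, ?_⟩
      have : jpow x (k + 2) = jpow x 2 * jpow x k := (pow2_mul x k).symm
      rw [this, ← comm24, ih.1, pow2_mul]

lemma pow4_mul (x : Q) (n : ℕ) : jpow x 4 * jpow x n = jpow x (n + 4) :=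
  (pow4_mul_aux x n).1

lemma pow8 (x : Q) : jpow x 4 * jpow x 4 = jpow x 8 := pow4_mul x 4

/-- `L_{x⁴}` commutes with `L_{x⁸}`. -/
lemma comm48 (x : Q) (y : Q) :
    jpow x 4 * (jpow x 8 * y) = jpow x 8 * (jpow x 4 * y) := by
  have j := JordanLoop.jordan (jpow x 4) y
  rw [pow8] at j
  rw [JordanLoop.mul_comm (jpow x 4) (jpow x 8 * y), j,
    JordanLoop.mul_comm y (jpow x 4)]

end JordanLoopAux

open JordanLoopAux in
/-- In any Jordan loop, if `x³ · x⁸ = x^{11}` then `x⁸ · x⁻¹ = x⁷`, where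
`x⁻¹` is the (unique) element with `x · x⁻¹ = e`. -/
theorem pow_eight_mul_inv {Q : Type*} [JordanLoop Q] (x xi : Q)
    (h11 : jpow x 3 * jpow x 8 = jpow x 11) (h : x * xi = 1) :
    jpow x 8 * xi = jpow x 7 := by
  -- x² * xi = x
  have h2 : jpow x 2 * xi = x := by
    apply jl_mul_left_cancel x
    rw [pow2, jstar, h, JordanLoop.mul_one]
  -- x⁴ * xi = x³
  have h4 : jpow x 4 * xi = jpow x 3 := by
    apply jl_mul_left_cancel (jpow x 2)
    rw [comm24, h2, JordanLoop.mul_comm (jpow x 4) x,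
      show x * jpow x 4 = jpow x 5 from rfl, pow2_mul]
  -- finish
  apply jl_mul_left_cancel (jpow x 4)
  rw [comm48, h4, JordanLoop.mul_comm (jpow x 8) (jpow x 3), h11, pow4_mul]
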